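/- Let k ≥ 1 and p ≥ 0 be fixed integers. Then there exists a constant N_{p,k} > 0 such that for all integers n ≥ k + p + 2 and all x > 0, w_p(x) · M_{n,k}( (t−x)²/w_p(t); x ) ≤ N_{p,k} · x²/n, where the operator is applied to the function t ↦ (t−x)²·(1+t^p) for p ≥ 1 and t ↦ (t−x)² for p = 0. -/

import Mathlib

open MeasureTheory Set

/-- The Gamma-type operator `M_{n,k}(f;x)`. -/
noncomputable def Mnk (n k : ℕ) (f : ℝ → ℝ) (x : ℝ) : ℝ :=
  (((2 * n - k + 1).factorial : ℝ) * x ^ (n + 1) /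
      ((n.factorial : ℝ) * ((n - k).factorial : ℝ))) *
    ∫ t in Ioi (0 : ℝ), t ^ (n - k) / (x + t) ^ (2 * n - k + 2) * f t

/-- The polynomial weight: `w_0 = 1`, `w_p(x) = 1/(1+x^p)` for `p ≥ 1`. -/
noncomputable def wp (p : ℕ) (x : ℝ) : ℝ := if p = 0 then 1 else 1 / (1 + x ^ p)

/-- The weighted sup-norm `‖f‖_p = sup_{x ≥ 0} w_p(x)|f(x)|`. -/
noncomputable def pNorm (p : ℕ) (f : ℝ → ℝ) : ℝ :=
  ⨆ x : {x : ℝ // 0 ≤ x}, wp p x.val * |f x.val|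

/-- Second symmetric difference `Δ_h² f`. -/
def Delta2 (h : ℝ) (f : ℝ → ℝ) (x : ℝ) : ℝ := f (x + 2 * h) - 2 * f (x + h) + f x

/-- Second weighted modulus of smoothness `ω_p²(f;δ)`. -/
noncomputable def omega2 (p : ℕ) (f : ℝ → ℝ) (δ : ℝ) : ℝ :=
  ⨆ h : {h : ℝ // 0 < h ∧ h ≤ δ}, pNorm p (Delta2 h.val f)

/-- First weighted modulus `ω_p¹(f;δ)`. -/
noncomputable def omega1 (p : ℕ) (f : ℝ → ℝ) (δ : ℝ) : ℝ :=
  sSup {y : ℝ | ∃ t x : ℝ, 0 ≤ t ∧ 0 ≤ x ∧ |t - x| ≤ δ ∧ y = wp p x * |f t - f x|}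

/-- Membership in the weighted space `C_p`: `w_p·f` is bounded and uniformly
continuous on `[0,∞)`. -/
def CpMem (p : ℕ) (f : ℝ → ℝ) : Prop :=
  (∃ B : ℝ, ∀ x ≥ (0 : ℝ), |wp p x * f x| ≤ B) ∧
    UniformContinuousOn (fun x => wp p x * f x) (Ici 0)

/-- Steklov mean `f_h`. -/
noncomputable def steklov (f : ℝ → ℝ) (h : ℝ) (x : ℝ) : ℝ :=
  4 / h ^ 2 *
    ∫ s in (0 : ℝ)..(h / 2), ∫ t in (0 : ℝ)..(h / 2),
      (2 * f (x + s + t) - f (x + 2 * (s + t)))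
/-!
The kernel moments are Beta integrals,
`∫₀^∞ t^a (x+t)^{-(a+c+2)} dt = a! c! / ((a+c+1)! x^{c+1})`, obtained by integrating by parts
in `a`. Hence `M_{n,k}(t^j; x) = μ_j x^j` with `μ_j = (m+j)! (n-j)! / (n! m!)`, `m = n - k`, and
`M_{n,k}((t-x)² t^q; x) = (μ_{q+2} - 2μ_{q+1} + μ_q) x^{q+2}`. Writing `n = u + q + 2`, this
second difference is `(m+q)! u! / (n! m!) · ((2q+2-k)² + n + m)`: the factorial ratio is
`O(1/n²)` and the bracket `O(n)`. Finally `1/w_p(t) ≤ 1 + t^p` and `w_p(x) (1 + x^p) ≤ 2` reduce the weighted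
estimate to the cases `q = 0` and `q = p`.
-/

open Filter Topology Nat

section BetaIntegral

variable {x : ℝ}

lemma hasDerivAt_neg_inv_mul_add_pow (c : ℕ) {t : ℝ} (hxt : x + t ≠ 0) :
    HasDerivAt (fun t => -(((c + 1 : ℝ) * (x + t) ^ (c + 1))⁻¹)) ((x + t) ^ (c + 2))⁻¹ t := by
  have h : HasDerivAt (fun t => (c + 1 : ℝ) * (x + t) ^ (c + 1))
      ((c + 1 : ℝ) * ((c + 1 : ℝ) * (x + t) ^ c)) t := by
    simpa using (((hasDerivAt_id t).const_add x).fun_pow (c + 1)).const_mul ((c : ℝ) + 1)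
  refine (h.inv (mul_ne_zero (by positivity) (pow_ne_zero _ hxt))).neg.congr_deriv ?_
  field_simp
  ring

lemma tendsto_inv_add_pow_atTop (x : ℝ) (c : ℕ) :
    Tendsto (fun t : ℝ => ((x + t) ^ (c + 1))⁻¹) atTop (𝓝 0) :=
  ((tendsto_pow_atTop c.succ_ne_zero).comp
    (tendsto_atTop_add_const_left _ x tendsto_id)).inv_tendsto_atTop

lemma tendsto_neg_inv_mul_add_pow_atTop (x : ℝ) (c : ℕ) :
    Tendsto (fun t => -(((c + 1 : ℝ) * (x + t) ^ (c + 1))⁻¹)) atTop (𝓝 0) := by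
  simpa [mul_inv, mul_comm] using
    ((tendsto_inv_add_pow_atTop x c).const_mul ((c : ℝ) + 1)⁻¹).neg

lemma integrableOn_inv_add_pow (hx : 0 < x) (c : ℕ) :
    IntegrableOn (fun t => ((x + t) ^ (c + 2))⁻¹) (Ioi 0) :=
  integrableOn_Ioi_deriv_of_nonneg'
    (fun t ht => hasDerivAt_neg_inv_mul_add_pow c (add_pos_of_pos_of_nonneg hx ht).ne')
    (fun t ht => by have : 0 < x + t := add_pos hx ht; positivity)
    (tendsto_neg_inv_mul_add_pow_atTop x c)

lemma integral_inv_add_pow (hx : 0 < x) (c : ℕ) :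
    ∫ t in Ioi 0, ((x + t) ^ (c + 2))⁻¹ = ((c + 1 : ℝ) * x ^ (c + 1))⁻¹ := by
  rw [integral_Ioi_of_hasDerivAt_of_nonneg'
    (fun t ht => hasDerivAt_neg_inv_mul_add_pow c (add_pos_of_pos_of_nonneg hx ht).ne')
    (fun t ht => by have : 0 < x + t := add_pos hx ht; positivity)
    (tendsto_neg_inv_mul_add_pow_atTop x c)]
  simp

lemma integrableOn_pow_div_add_pow (hx : 0 < x) (a c : ℕ) :
    IntegrableOn (fun t => t ^ a / (x + t) ^ (a + c + 2)) (Ioi 0) := by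
  have hmeas : ContinuousOn (fun t => t ^ a / (x + t) ^ (a + c + 2)) (Ioi 0) :=
    (continuous_pow a).continuousOn.div (by fun_prop) fun t ht => by
      have : 0 < x + t := add_pos hx ht; positivity
  refine (integrableOn_inv_add_pow hx c).mono' (hmeas.aestronglyMeasurable measurableSet_Ioi) ?_
  filter_upwards [ae_restrict_mem measurableSet_Ioi] with t (ht : 0 < t)
  rw [Real.norm_of_nonneg (by positivity), div_le_iff₀ (by positivity),
    show a + c + 2 = (c + 2) + a by ring, pow_add (x + t) (c + 2) a,
    inv_mul_cancel_left₀ (by positivity)]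
  exact pow_le_pow_left₀ ht.le (by linarith) a

lemma hasDerivAt_pow_div_add_pow (a c : ℕ) {t : ℝ} (hxt : x + t ≠ 0) :
    HasDerivAt (fun t => t ^ (a + 1) / (x + t) ^ (a + c + 2))
      ((a + 1 : ℝ) * (t ^ a / (x + t) ^ (a + c + 2)) -
        (a + c + 2 : ℝ) * (t ^ (a + 1) / (x + t) ^ (a + 1 + c + 2))) t := by
  have h : HasDerivAt (fun t => (x + t) ^ (a + c + 2))
      ((a + c + 2 : ℝ) * (x + t) ^ (a + c + 1)) t := by
    simpa using ((hasDerivAt_id t).const_add x).fun_pow (a + c + 2)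
  refine ((hasDerivAt_pow (a + 1) t).div h (pow_ne_zero _ hxt)).congr_deriv ?_
  field_simp
  push_cast
  ring

lemma tendsto_pow_div_add_pow_atTop (hx : 0 < x) (a c : ℕ) :
    Tendsto (fun t => t ^ (a + 1) / (x + t) ^ (a + c + 2)) atTop (𝓝 0) := by
  refine squeeze_zero' ?_ ?_ (tendsto_inv_add_pow_atTop x c)
  · filter_upwards [eventually_ge_atTop 0] with t ht
    positivity
  · filter_upwards [eventually_ge_atTop 0] with t ht
    have hxt : 0 < x + t := by linarith
    calc t ^ (a + 1) / (x + t) ^ (a + c + 2) ≤ (x + t) ^ (a + 1) / (x + t) ^ (a + c + 2) := by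
          gcongr; linarith
      _ = ((x + t) ^ (c + 1))⁻¹ := by
          rw [show a + c + 2 = (a + 1) + (c + 1) by ring]
          field_simp
          ring

lemma integral_pow_succ_div_add_pow (hx : 0 < x) (a c : ℕ) :
    ∫ t in Ioi 0, t ^ (a + 1) / (x + t) ^ (a + 1 + c + 2) =
      (a + 1) / (a + c + 2) * ∫ t in Ioi 0, t ^ a / (x + t) ^ (a + c + 2) := by
  have hint := integrableOn_pow_div_add_pow hx a c
  have hint' := integrableOn_pow_div_add_pow hx (a + 1) c
  have hibp := integral_Ioi_of_hasDerivAt_of_tendsto'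
    (fun t ht => hasDerivAt_pow_div_add_pow a c (add_pos_of_pos_of_nonneg hx ht).ne')
    ((hint.const_mul _).sub (hint'.const_mul _)) (tendsto_pow_div_add_pow_atTop hx a c)
  rw [integral_sub (hint.const_mul _) (hint'.const_mul _), integral_const_mul,
    integral_const_mul] at hibp
  rw [zero_pow (succ_ne_zero a), zero_div, sub_zero] at hibp
  field_simp
  linarith

lemma integral_pow_div_add_pow (hx : 0 < x) (a c : ℕ) :
    ∫ t in Ioi 0, t ^ a / (x + t) ^ (a + c + 2) = a ! * c ! / ((a + c + 1)! * x ^ (c + 1)) := by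
  induction a with
  | zero =>
    simp only [pow_zero, one_div, zero_add, integral_inv_add_pow hx, factorial_zero,
      factorial_succ]
    push_cast
    field_simp
  | succ a ih =>
    rw [integral_pow_succ_div_add_pow hx, ih, show a + 1 + c + 1 = (a + c + 1) + 1 by ring,
      factorial_succ (a + c + 1), factorial_succ a]
    push_cast
    field_simp
    ring

end BetaIntegral

section Operator

variable {n k : ℕ} {x : ℝ} {f g : ℝ → ℝ}

def MnkIntegrable (n k : ℕ) (f : ℝ → ℝ) (x : ℝ) : Prop :=
  IntegrableOn (fun t => t ^ (n - k) / (x + t) ^ (2 * n - k + 2) * f t) (Ioi 0)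

lemma MnkIntegrable.add (hf : MnkIntegrable n k f x) (hg : MnkIntegrable n k g x) :
    MnkIntegrable n k (fun t => f t + g t) x := by
  simp only [MnkIntegrable, mul_add]
  exact Integrable.add hf hg

lemma MnkIntegrable.sub (hf : MnkIntegrable n k f x) (hg : MnkIntegrable n k g x) :
    MnkIntegrable n k (fun t => f t - g t) x := by
  simp only [MnkIntegrable, mul_sub]
  exact Integrable.sub hf hg

lemma MnkIntegrable.const_mul (hf : MnkIntegrable n k f x) (c : ℝ) :
    MnkIntegrable n k (fun t => c * f t) x := by
  simp only [MnkIntegrable, mul_left_comm _ c]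
  exact Integrable.const_mul hf c

lemma Mnk_add (hf : MnkIntegrable n k f x) (hg : MnkIntegrable n k g x) :
    Mnk n k (fun t => f t + g t) x = Mnk n k f x + Mnk n k g x := by
  simp only [Mnk, mul_add, integral_add hf hg]

lemma Mnk_sub (hf : MnkIntegrable n k f x) (hg : MnkIntegrable n k g x) :
    Mnk n k (fun t => f t - g t) x = Mnk n k f x - Mnk n k g x := by
  simp only [Mnk, mul_sub, integral_sub hf hg]

lemma Mnk_const_mul (c : ℝ) : Mnk n k (fun t => c * f t) x = c * Mnk n k f x := by
  simp only [Mnk, mul_left_comm _ c, integral_const_mul]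

lemma Mnk_mono (hx : 0 ≤ x) (hf : ∀ t > 0, 0 ≤ f t) (hfg : ∀ t > 0, f t ≤ g t)
    (hg : MnkIntegrable n k g x) : Mnk n k f x ≤ Mnk n k g x := by
  refine mul_le_mul_of_nonneg_left (integral_mono_of_nonneg ?_ hg ?_) (by positivity)
  · filter_upwards [ae_restrict_mem measurableSet_Ioi] with t (ht : 0 < t)
    have := hf t ht
    positivity
  · filter_upwards [ae_restrict_mem measurableSet_Ioi] with t (ht : 0 < t)
    have := hfg t ht
    gcongr

lemma Mnk_kernel_mul_pow {j : ℕ} (hkn : k ≤ n) (hjn : j ≤ n) :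
    (fun t : ℝ => t ^ (n - k) / (x + t) ^ (2 * n - k + 2) * t ^ j) =
      fun t => t ^ (n - k + j) / (x + t) ^ (n - k + j + (n - j) + 2) := by
  ext t
  rw [show n - k + j + (n - j) + 2 = 2 * n - k + 2 by omega]
  ring

lemma mnkIntegrable_pow {j : ℕ} (hx : 0 < x) (hkn : k ≤ n) (hjn : j ≤ n) :
    MnkIntegrable n k (fun t => t ^ j) x := by
  rw [MnkIntegrable, Mnk_kernel_mul_pow hkn hjn]
  exact integrableOn_pow_div_add_pow hx _ _

noncomputable def momentCoeff (n m j : ℕ) : ℝ := (m + j)! * (n - j)! / (n ! * m !)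

lemma Mnk_pow {j : ℕ} (hx : 0 < x) (hkn : k ≤ n) (hjn : j ≤ n) :
    Mnk n k (fun t => t ^ j) x = momentCoeff n (n - k) j * x ^ j := by
  rw [Mnk, Mnk_kernel_mul_pow hkn hjn, integral_pow_div_add_pow hx,
    show n - k + j + (n - j) + 1 = 2 * n - k + 1 by omega, momentCoeff,
    show n + 1 = j + (n - j + 1) by omega, pow_add]
  field_simp

end Operator

section SecondMoment

variable {n k q : ℕ} {x : ℝ}

lemma sq_sub_mul_pow_eq (x : ℝ) (q : ℕ) :
    (fun t : ℝ => (t - x) ^ 2 * t ^ q) =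
      fun t => t ^ (q + 2) - 2 * x * t ^ (q + 1) + x ^ 2 * t ^ q := by
  ext t
  ring

lemma mnkIntegrable_sq_sub_mul_pow (hx : 0 < x) (hkn : k ≤ n) (hqn : q + 2 ≤ n) :
    MnkIntegrable n k (fun t => (t - x) ^ 2 * t ^ q) x := by
  rw [sq_sub_mul_pow_eq]
  exact ((mnkIntegrable_pow hx hkn hqn).sub
    ((mnkIntegrable_pow hx hkn (by omega)).const_mul _)).add
      ((mnkIntegrable_pow hx hkn (by omega)).const_mul _)

lemma Mnk_sq_sub_mul_pow (hx : 0 < x) (hkn : k ≤ n) (hqn : q + 2 ≤ n) :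
    Mnk n k (fun t => (t - x) ^ 2 * t ^ q) x =
      (momentCoeff n (n - k) (q + 2) - 2 * momentCoeff n (n - k) (q + 1) +
        momentCoeff n (n - k) q) * x ^ (q + 2) := by
  have hq2 := mnkIntegrable_pow hx hkn hqn
  have hq1 := mnkIntegrable_pow hx hkn (j := q + 1) (by omega)
  have hq0 := mnkIntegrable_pow hx hkn (j := q) (by omega)
  rw [sq_sub_mul_pow_eq, Mnk_add (hq2.sub (hq1.const_mul _)) (hq0.const_mul _),
    Mnk_sub hq2 (hq1.const_mul _), Mnk_const_mul, Mnk_const_mul, Mnk_pow hx hkn hqn,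
    Mnk_pow hx hkn (by omega), Mnk_pow hx hkn (by omega)]
  ring

/-- With `A = m + q + 1` and `B = u + 1`, the second difference is `(A + 1)A - 2AB + (B + 1)B`
times the common factor, and this equals `(A - B)² + A + B`. -/
lemma momentCoeff_second_diff (m q u : ℕ) :
    momentCoeff (u + q + 2) m (q + 2) - 2 * momentCoeff (u + q + 2) m (q + 1) +
        momentCoeff (u + q + 2) m q =
      (m + q)! * u ! / ((u + q + 2)! * m !) * (((m : ℝ) + q - u) ^ 2 + (m + u + q + 2)) := by
  simp only [momentCoeff, show u + q + 2 - (q + 2) = u by omega,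
    show u + q + 2 - (q + 1) = u + 1 by omega, show u + q + 2 - q = u + 2 by omega,
    show m + (q + 2) = m + q + 1 + 1 by omega, show m + (q + 1) = m + q + 1 by omega,
    factorial_succ]
  push_cast
  field_simp
  ring

lemma factorial_mul_factorial_mul_sq_le {m q u : ℕ} (h : m + q ≤ (q + 1) * (u + 1)) :
    (m + q)! * u ! * (u + 1) ^ 2 ≤ (q + 1) ^ q * (m ! * (u + q + 2)!) := by
  have hnum : (m + q)! ≤ m ! * ((q + 1) * (u + 1)) ^ q := by
    rw [← factorial_mul_ascFactorial]
    gcongr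
    exact (ascFactorial_le_pow_add m q).trans (Nat.pow_le_pow_left h q)
  have hden : u ! * (u + 1) ^ (q + 2) ≤ (u + q + 2)! := by
    rw [show u + q + 2 = u + (q + 2) by ring, ← factorial_mul_ascFactorial]
    gcongr
    exact pow_succ_le_ascFactorial _ _
  calc (m + q)! * u ! * (u + 1) ^ 2 ≤ m ! * ((q + 1) * (u + 1)) ^ q * u ! * (u + 1) ^ 2 := by
        gcongr
    _ = (q + 1) ^ q * (m ! * (u ! * (u + 1) ^ (q + 2))) := by rw [mul_pow]; ring
    _ ≤ (q + 1) ^ q * (m ! * (u + q + 2)!) := by gcongr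

noncomputable def secondMomentConst (k q : ℕ) : ℝ :=
  (q + 1) ^ q * (q + 2) ^ 2 * ((2 * q + 2 + k) ^ 2 + 2)

lemma secondMomentConst_pos (k q : ℕ) : 0 < secondMomentConst k q := by
  unfold secondMomentConst
  positivity

lemma momentCoeff_second_diff_le (hk : 1 ≤ k) (hn : k + q + 2 ≤ n) :
    momentCoeff n (n - k) (q + 2) - 2 * momentCoeff n (n - k) (q + 1) + momentCoeff n (n - k) q ≤
      secondMomentConst k q / n := by
  obtain ⟨u, rfl⟩ : ∃ u, n = u + q + 2 := ⟨n - q - 2, by omega⟩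
  obtain ⟨m, hm⟩ : ∃ m, u + q + 2 - k = m := ⟨_, rfl⟩
  have hu : 1 ≤ u := by omega
  have hkm : k + m = u + q + 2 := by omega
  have hk' : (k : ℝ) = u + q + 2 - m := by
    rw [eq_sub_iff_add_eq]; exact_mod_cast hkm
  have hmq : m + q ≤ (q + 1) * (u + 1) := by nlinarith [Nat.mul_le_mul_left q hu]
  have hu' : (1 : ℝ) ≤ u := by exact_mod_cast hu
  have hfactor : ((m + q)! * u ! / ((u + q + 2)! * m !) : ℝ) ≤ (q + 1) ^ q / (u + 1) ^ 2 := by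
    rw [div_le_div_iff₀ (by positivity) (by positivity), mul_comm ((u + q + 2)! : ℝ)]
    exact_mod_cast factorial_mul_factorial_mul_sq_le hmq
  have hbracket : ((m : ℝ) + q - u) ^ 2 + (m + u + q + 2) ≤
      ((2 * q + 2 + k) ^ 2 + 2) * (u + q + 2) := by
    nlinarith
  have hsize : ((u : ℝ) + q + 2) / (u + 1) ^ 2 ≤ (q + 2) ^ 2 / (u + q + 2) := by
    have h : (u + q + 2 : ℝ) ≤ (q + 2) * (u + 1) := by nlinarith
    rw [div_le_div_iff₀ (by positivity) (by positivity)]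
    nlinarith [mul_self_le_mul_self (by positivity) h]
  rw [hm, momentCoeff_second_diff, secondMomentConst]
  push_cast
  calc _ ≤ (q + 1 : ℝ) ^ q / (u + 1) ^ 2 * (((2 * q + 2 + k) ^ 2 + 2) * (u + q + 2)) := by
        gcongr
    _ = (q + 1 : ℝ) ^ q * ((2 * q + 2 + k) ^ 2 + 2) * ((u + q + 2) / (u + 1) ^ 2) := by ring
    _ ≤ (q + 1 : ℝ) ^ q * ((2 * q + 2 + k) ^ 2 + 2) * ((q + 2) ^ 2 / (u + q + 2)) := by
        gcongr
    _ = _ := by ring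

lemma Mnk_sq_sub_mul_pow_le (hx : 0 < x) (hk : 1 ≤ k) (hn : k + q + 2 ≤ n) :
    Mnk n k (fun t => (t - x) ^ 2 * t ^ q) x ≤ secondMomentConst k q * x ^ (q + 2) / n := by
  rw [Mnk_sq_sub_mul_pow hx (by omega) (by omega), mul_div_right_comm]
  exact mul_le_mul_of_nonneg_right (momentCoeff_second_diff_le hk hn) (by positivity)

end SecondMoment

section Weight

variable {t : ℝ}

lemma wp_pos (p : ℕ) (ht : 0 ≤ t) : 0 < wp p t := by
  unfold wp
  split_ifs <;> positivity

lemma inv_wp_le (p : ℕ) (t : ℝ) : (wp p t)⁻¹ ≤ 1 + t ^ p := by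
  unfold wp
  split_ifs with hp
  · subst hp
    norm_num
  · simp

lemma wp_mul_one_add_pow_le_two (p : ℕ) (ht : 0 ≤ t) : wp p t * (1 + t ^ p) ≤ 2 := by
  unfold wp
  split_ifs with hp
  · subst hp
    norm_num
  · rw [one_div, inv_mul_cancel₀ (by positivity)]
    norm_num

end Weight

lemma Mnk_sq_sub_div_wp_le {n k p : ℕ} {x : ℝ} (hx : 0 < x) (hk : 1 ≤ k) (hn : k + p + 2 ≤ n) :
    Mnk n k (fun t => (t - x) ^ 2 / wp p t) x ≤
      (secondMomentConst k 0 + secondMomentConst k p) * x ^ 2 * (1 + x ^ p) / n := by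
  have h0 := mnkIntegrable_sq_sub_mul_pow (n := n) (k := k) (q := 0) hx (by omega) (by omega)
  have hp := mnkIntegrable_sq_sub_mul_pow (n := n) (k := k) (q := p) hx (by omega) (by omega)
  calc Mnk n k (fun t => (t - x) ^ 2 / wp p t) x
      ≤ Mnk n k (fun t => (t - x) ^ 2 * t ^ 0 + (t - x) ^ 2 * t ^ p) x := by
        refine Mnk_mono hx.le (fun t ht => ?_) (fun t _ => ?_) (h0.add hp)
        · exact div_nonneg (sq_nonneg _) (wp_pos p ht.le).le
        · rw [div_eq_mul_inv, pow_zero, ← mul_add]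
          exact mul_le_mul_of_nonneg_left (inv_wp_le p t) (sq_nonneg _)
    _ ≤ secondMomentConst k 0 * x ^ (0 + 2) / n + secondMomentConst k p * x ^ (p + 2) / n := by
        rw [Mnk_add h0 hp]
        exact add_le_add (Mnk_sq_sub_mul_pow_le hx hk (by omega)) (Mnk_sq_sub_mul_pow_le hx hk hn)
    _ ≤ _ := by
        have hC0 := secondMomentConst_pos k 0
        have hCp := secondMomentConst_pos k p
        have hxp : 0 ≤ x ^ p := by positivity
        rw [← add_div, zero_add, pow_add]
        gcongr
        nlinarith [mul_nonneg (mul_nonneg hC0.le (sq_nonneg x)) hxp,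
          mul_nonneg hCp.le (sq_nonneg x)]

/-- Weighted second central moment estimate:
`w_p(x)·M_{n,k}((t−x)²/w_p(t);x) ≤ N_{p,k}·x²/n`. -/
theorem Mnk_weighted_second_moment (k p : ℕ) (hk : 1 ≤ k) :
    ∃ N > (0 : ℝ), ∀ n : ℕ, k + p + 2 ≤ n → ∀ x : ℝ, 0 < x →
      wp p x * Mnk n k (fun t => (t - x) ^ 2 / wp p t) x ≤ N * x ^ 2 / (n : ℝ) := by
  set C := secondMomentConst k 0 + secondMomentConst k p
  have hC : 0 < C := add_pos (secondMomentConst_pos k 0) (secondMomentConst_pos k p)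
  refine ⟨2 * C, by positivity, fun n hn x hx => ?_⟩
  calc wp p x * Mnk n k (fun t => (t - x) ^ 2 / wp p t) x
      ≤ wp p x * (C * x ^ 2 * (1 + x ^ p) / n) :=
        mul_le_mul_of_nonneg_left (Mnk_sq_sub_div_wp_le hx hk hn) (wp_pos p hx.le).le
    _ = wp p x * (1 + x ^ p) * (C * x ^ 2 / n) := by ring
    _ ≤ 2 * (C * x ^ 2 / n) := by
        gcongr
        exact wp_mul_one_add_pow_le_two p hx.le
    _ = 2 * C * x ^ 2 / n := by ring
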